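/- Let A, B, C : [0,1] → ℝ be continuous. Suppose there exist real numbers a, b and c such that the function t ↦ a·A(t) + b·B(t) is not identically zero on [0,1] and does not change sign on [0,1], and such that (b·C(t) − c·A(t))² + (a·A(t) + b·B(t))·(c·B(t) + a·C(t)) < 0 for all t ∈ [0,1]. Then the Abel equation x' = A(t)x³ + B(t)x² + C(t)x has at most four periodic orbits with nonzero initial condition; that is, the set of initial values γ(0) of periodic orbits γ with γ(0) ≠ 0 has at most four elements. -/

import Mathlib

/-- `γ : ℝ → ℝ` solves the general Abel equation `x' = A(t)x³ + B(t)x² + C(t)x` on `[0,1]`. -/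
def IsGeneralAbelSolution (A B C : ℝ → ℝ) (γ : ℝ → ℝ) : Prop :=
  ∀ t ∈ Set.Icc (0:ℝ) 1,
    HasDerivWithinAt γ (A t * γ t ^ 3 + B t * γ t ^ 2 + C t * γ t) (Set.Icc (0:ℝ) 1) t

/-- A periodic orbit: a solution on `[0,1]` with `γ 0 = γ 1`. -/
def IsGeneralPeriodicOrbit (A B C : ℝ → ℝ) (γ : ℝ → ℝ) : Prop :=
  IsGeneralAbelSolution A B C γ ∧ γ 0 = γ 1

/-!
Write `W(t, x) = A x² + B x + C`, so that the equation is `x' = x W(t, x)`, and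
`V(x) = b x² - a x + c`. After changing the sign of `(a, b, c)` if necessary, the hypotheses imply
that `R(t, x) = (aA + bB) x² + 2 (bC - cA) x - (cB + aC)` is positive for all `x`, and
`R = W V' - (∂ₓW) V` is the Wronskian of `W(t, ·)` and `V` in `x`. This has two consequences.
At a root `r ≠ 0` of `V` the field `r W(t, r)` has the constant sign of `r V'(r)`, so periodic
orbits never meet the line `x = r`; by uniqueness they do not meet `x = 0` either. On an interval
free of zeros of `x V(x)` the quotient `W / V` is strictly decreasing in `x`; hence if two ordered
periodic orbits `γ₁ < γ₂` lived in such an interval, `H(γ₁) - H(γ₂)` with `H' = 1 / (x V(x))`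
would have derivative `W(t, γ₁)/V(γ₁) - W(t, γ₂)/V(γ₂) > 0`, against periodicity. So between the
initial values of two periodic orbits lies one of the at most three roots of the cubic `x V(x)`.
-/

open Set Filter Topology

theorem IsPreconnected.forall_lt_of_forall_ne {X α : Type*} [TopologicalSpace X] [LinearOrder α]
    [TopologicalSpace α] [OrderClosedTopology α] {s : Set X} {f : X → α} {x₀ : X} {c : α}
    (hs : IsPreconnected s) (hf : ContinuousOn f s) (hne : ∀ x ∈ s, f x ≠ c) (hx₀ : x₀ ∈ s)
    (hlt : f x₀ < c) : ∀ x ∈ s, f x < c := by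
  intro x hx
  by_contra! hle
  obtain ⟨y, hy, hyc⟩ := hs.intermediate_value hx₀ hx hf ⟨hlt.le, hle⟩
  exact hne y hy hyc

theorem IsPreconnected.forall_gt_of_forall_ne {X α : Type*} [TopologicalSpace X] [LinearOrder α]
    [TopologicalSpace α] [OrderClosedTopology α] {s : Set X} {f : X → α} {x₀ : X} {c : α}
    (hs : IsPreconnected s) (hf : ContinuousOn f s) (hne : ∀ x ∈ s, f x ≠ c) (hx₀ : x₀ ∈ s)
    (hlt : c < f x₀) : ∀ x ∈ s, c < f x :=
  hs.forall_lt_of_forall_ne (α := αᵒᵈ) hf hne hx₀ hlt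

theorem Set.encard_le_card_add_one_of_exists_between {α : Type*} [LinearOrder α] {S : Set α}
    (T : Finset α) (hST : ∀ x ∈ S, ∀ y ∈ S, x < y → ∃ z ∈ T, x < z ∧ z < y) :
    S.encard ≤ T.card + 1 := by
  classical
  set f : α → WithTop α := fun x => (T.filter (x < ·)).min
  have hf : StrictMonoOn f S := by
    intro x hx y hy hxy
    obtain ⟨z, hzT, hxz, hzy⟩ := hST x hx y hy hxy
    calc f x ≤ z := Finset.min_le (Finset.mem_filter.2 ⟨hzT, hxz⟩)
      _ < y := WithTop.coe_lt_coe.2 hzy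
      _ ≤ f y := Finset.le_min fun w hw => WithTop.coe_le_coe.2 (Finset.mem_filter.1 hw).2.le
  have himage : f '' S ⊆ ↑(insert ⊤ (T.image ((↑) : α → WithTop α))) := by
    rintro _ ⟨x, -, rfl⟩
    rcases eq_or_ne (f x) ⊤ with h | h
    · simp [h]
    · obtain ⟨m, hm⟩ := WithTop.ne_top_iff_exists.1 h
      simp only [Finset.coe_insert, Finset.coe_image, mem_insert_iff, mem_image, Finset.mem_coe]
      exact Or.inr ⟨m, (Finset.mem_filter.1 (Finset.mem_of_min hm.symm)).1, hm⟩
  calc S.encard = (f '' S).encard := hf.injOn.encard_image.symm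
    _ ≤ (insert ⊤ (T.image ((↑) : α → WithTop α))).card := by
      rw [← Set.encard_coe_eq_coe_finsetCard]
      exact encard_le_encard himage
    _ ≤ T.card + 1 := by
      exact_mod_cast (Finset.card_insert_le _ _).trans (Nat.add_le_add_right Finset.card_image_le 1)

theorem ne_zero_of_deriv_pos_at_zeros {φ φ' : ℝ → ℝ} {a b : ℝ} (hab : a < b)
    (hφ : ∀ t ∈ Icc a b, HasDerivWithinAt φ (φ' t) (Icc a b) t)
    (hpos : ∀ t ∈ Icc a b, φ t = 0 → 0 < φ' t) (hper : φ a = φ b) :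
    ∀ t ∈ Icc a b, φ t ≠ 0 := by
  have hcont : ContinuousOn φ (Icc a b) := fun t ht => (hφ t ht).continuousWithinAt
  -- a fence argument: the derivative condition keeps `φ` from crossing `0` downwards
  have hfence : ∀ s ∈ Icc a b, 0 ≤ φ s → ∀ t ∈ Icc s b, 0 ≤ φ t := by
    intro s hs hφs t ht
    have hsub : Icc s b ⊆ Icc a b := Icc_subset_Icc_left hs.1
    have := image_le_of_deriv_right_lt_deriv_boundary' (f := fun t => -φ t)
      (f' := fun t => -φ' t) (B := fun _ => 0) (B' := fun _ => 0)
      (hcont.mono hsub).neg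
      (fun x hx => ((hφ x (hsub (Ico_subset_Icc_self hx))).mono_of_mem_nhdsWithin
        (Icc_mem_nhdsGE_of_mem ⟨hs.1.trans hx.1, hx.2⟩)).neg)
      (by simpa using hφs) continuousOn_const (fun _ _ => hasDerivWithinAt_const _ _ _)
      (fun x hx h => by simpa using hpos x (hsub (Ico_subset_Icc_self hx)) (neg_eq_zero.1 h)) ht
    simpa using this
  intro t₀ ht₀ hzero
  obtain ⟨t₁, ht₁, hat₁, hφt₁⟩ : ∃ t₁ ∈ Icc a b, a < t₁ ∧ φ t₁ = 0 := by
    rcases ht₀.1.eq_or_lt with rfl | h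
    · exact ⟨b, right_mem_Icc.2 hab.le, hab, hper ▸ hzero⟩
    · exact ⟨t₀, ht₀, h, hzero⟩
  have hnonneg : ∀ t ∈ Icc a b, 0 ≤ φ t := hfence a (left_mem_Icc.2 hab.le)
    (hper ▸ hfence t₁ ht₁ hφt₁.ge b (right_mem_Icc.2 ht₁.2))
  have hmin : IsMinOn φ (Icc a b) t₁ := fun t ht => by simpa [hφt₁] using hnonneg t ht
  have hslope := hmin.localize.hasFDerivWithinAt_nonneg (hφ t₁ ht₁).hasFDerivWithinAt
    (sub_mem_posTangentConeAt_of_segment_subset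
      ((convex_Icc a b).segment_subset ht₁ (left_mem_Icc.2 hab.le)))
  rw [ContinuousLinearMap.toSpanSingleton_apply, smul_eq_mul] at hslope
  exact (mul_neg_of_neg_of_pos (sub_neg.2 hat₁) (hpos t₁ ht₁ hφt₁)).not_ge hslope

theorem ContinuousOn.exists_hasDerivAt_Icc {f : ℝ → ℝ} {m M : ℝ}
    (hf : ContinuousOn f (Icc m M)) : ∃ F : ℝ → ℝ, ∀ x ∈ Icc m M, HasDerivAt F (f x) x := by
  rcases le_or_gt m M with hmM | hMm
  · have hg : Continuous fun x => f (projIcc m M hmM x) :=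
      hf.comp_continuous (continuous_subtype_val.comp continuous_projIcc)
        fun x => (projIcc m M hmM x).2
    refine ⟨fun x => ∫ y in m..x, f (projIcc m M hmM y), fun x hx => ?_⟩
    simpa [projIcc_of_mem hmM hx] using (hg.integral_hasStrictDerivAt m x).hasDerivAt
  · exact ⟨0, fun x hx => absurd (hx.1.trans hx.2) (not_le.2 hMm)⟩

theorem strictAntiOn_quadratic_div_quadratic {p q r a b c : ℝ} {s : Set ℝ} (hs : Convex ℝ s)
    (hV : ∀ x ∈ s, b * x ^ 2 - a * x + c ≠ 0)
    (hR : ∀ x, 0 < (a * p + b * q) * x ^ 2 + 2 * (b * r - c * p) * x - (c * q + a * r)) :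
    StrictAntiOn (fun x => (p * x ^ 2 + q * x + r) / (b * x ^ 2 - a * x + c)) s := by
  have hderiv (x : ℝ) (hx : b * x ^ 2 - a * x + c ≠ 0) :
      HasDerivAt (fun x => (p * x ^ 2 + q * x + r) / (b * x ^ 2 - a * x + c))
        (-((a * p + b * q) * x ^ 2 + 2 * (b * r - c * p) * x - (c * q + a * r))
          / (b * x ^ 2 - a * x + c) ^ 2) x := by
    have hW : HasDerivAt (fun x => p * x ^ 2 + q * x + r) (2 * p * x + q) x :=
      ((((hasDerivAt_pow 2 x).const_mul p).add ((hasDerivAt_id x).const_mul q)).add_const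
        r).congr_deriv (by norm_num; ring)
    have hV' : HasDerivAt (fun x => b * x ^ 2 - a * x + c) (2 * b * x - a) x :=
      ((((hasDerivAt_pow 2 x).const_mul b).sub ((hasDerivAt_id x).const_mul a)).add_const
        c).congr_deriv (by norm_num; ring)
    exact (hW.div hV' hx).congr_deriv (by ring)
  refine strictAntiOn_of_hasDerivWithinAt_neg hs
    (fun x hx => (hderiv x (hV x hx)).continuousAt.continuousWithinAt)
    (fun x hx => (hderiv x (hV x (interior_subset hx))).hasDerivWithinAt) fun x hx => ?_
  have := hV x (interior_subset hx)
  exact div_neg_of_neg_of_pos (neg_neg_of_pos (hR x)) (by positivity)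

theorem IsCompact.exists_Icc_forall_notMem {X : Type*} [TopologicalSpace X] {s : Set X}
    {f g : X → ℝ} {x₀ : X} {Z : Set ℝ} (hs : IsCompact s) (hs' : IsPreconnected s) (hx₀ : x₀ ∈ s)
    (hf : ContinuousOn f s) (hg : ContinuousOn g s) (hfg : ∀ x ∈ s, f x ≤ g x)
    (hfZ : ∀ x ∈ s, f x ∉ Z) (hgZ : ∀ x ∈ s, g x ∉ Z) (hZ : ∀ z ∈ Z, z ∉ Ioo (f x₀) (g x₀)) :
    ∃ m M, (∀ x ∈ s, f x ∈ Icc m M ∧ g x ∈ Icc m M) ∧ ∀ z ∈ Z, z ∉ Icc m M := by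
  obtain ⟨xm, hxm, hmin⟩ := hs.exists_isMinOn ⟨x₀, hx₀⟩ hf
  obtain ⟨xM, hxM, hmax⟩ := hs.exists_isMaxOn ⟨x₀, hx₀⟩ hg
  rw [isMinOn_iff] at hmin
  rw [isMaxOn_iff] at hmax
  refine ⟨f xm, g xM, fun x hx => ⟨⟨hmin x hx, (hfg x hx).trans (hmax x hx)⟩,
    ⟨(hmin x hx).trans (hfg x hx), hmax x hx⟩⟩, fun z hz hzI => ?_⟩
  have hfz : ∀ x ∈ s, f x ≠ z := fun x hx h => hfZ x hx (h ▸ hz)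
  have hgz : ∀ x ∈ s, g x ≠ z := fun x hx h => hgZ x hx (h ▸ hz)
  rcases le_or_gt z (f x₀) with h | h
  · exact (hs'.forall_gt_of_forall_ne hf hfz hx₀ (h.lt_of_ne (hfz x₀ hx₀).symm) xm hxm).not_ge
      hzI.1
  rcases lt_or_ge z (g x₀) with h' | h'
  · exact hZ z hz ⟨h, h'⟩
  · exact (hs'.forall_lt_of_forall_ne hg hgz hx₀ (h'.lt_of_ne' (hgz x₀ hx₀).symm) xM hxM).not_ge
      hzI.2

theorem abs_cubic_sub_cubic_le {p q r x y M R : ℝ} (hp : |p| ≤ M) (hq : |q| ≤ M) (hr : |r| ≤ M)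
    (hx : |x| ≤ R) (hy : |y| ≤ R) :
    |(p * x ^ 3 + q * x ^ 2 + r * x) - (p * y ^ 3 + q * y ^ 2 + r * y)|
      ≤ M * (3 * R ^ 2 + 2 * R + 1) * |x - y| := by
  have hR : 0 ≤ R := (abs_nonneg x).trans hx
  have h2 : |x ^ 2 + x * y + y ^ 2| ≤ 3 * R ^ 2 := by
    rw [abs_of_nonneg (by nlinarith [sq_nonneg (x + y)])]
    nlinarith [abs_mul_abs_self x, abs_mul_abs_self y, abs_mul x y, le_abs_self (x * y),
      mul_le_mul hx hy (abs_nonneg y) hR, mul_le_mul hx hx (abs_nonneg x) hR,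
      mul_le_mul hy hy (abs_nonneg y) hR]
  have h1 : |x + y| ≤ 2 * R := (abs_add_le x y).trans (by linarith)
  calc |(p * x ^ 3 + q * x ^ 2 + r * x) - (p * y ^ 3 + q * y ^ 2 + r * y)|
      = |p * (x ^ 2 + x * y + y ^ 2) + q * (x + y) + r| * |x - y| := by
        rw [← abs_mul]; ring_nf
    _ ≤ (|p| * |x ^ 2 + x * y + y ^ 2| + |q| * |x + y| + |r|) * |x - y| := by
        gcongr
        rw [← abs_mul, ← abs_mul]
        exact (abs_add_le _ _).trans (add_le_add (abs_add_le _ _) le_rfl)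
    _ ≤ (M * (3 * R ^ 2) + M * (2 * R) + M) * |x - y| := by
        gcongr <;> first | assumption | exact (abs_nonneg p).trans hp
    _ = M * (3 * R ^ 2 + 2 * R + 1) * |x - y| := by ring

theorem quadratic_pos_of_sq_add_mul_neg {α β γ : ℝ} (hα : 0 ≤ α) (h : β ^ 2 + α * γ < 0) (x : ℝ) :
    0 < α * x ^ 2 + 2 * β * x - γ := by
  have hα' : 0 < α := hα.lt_of_ne fun h0 => by subst h0; nlinarith [sq_nonneg β]
  nlinarith [sq_nonneg (α * x + β)]

section

variable {A B C : ℝ → ℝ}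

theorem exists_lipschitzOnWith_abel (hA : ContinuousOn A (Icc 0 1))
    (hB : ContinuousOn B (Icc 0 1)) (hC : ContinuousOn C (Icc 0 1)) (R : ℝ) :
    ∃ K, ∀ t ∈ Icc (0:ℝ) 1,
      LipschitzOnWith K (fun x => A t * x ^ 3 + B t * x ^ 2 + C t * x) (Icc (-R) R) := by
  obtain ⟨M, hM⟩ := isCompact_Icc.exists_bound_of_continuousOn (hA.abs.add hB.abs |>.add hC.abs)
  refine ⟨(M * (3 * R ^ 2 + 2 * R + 1)).toNNReal,
    fun t ht => LipschitzOnWith.of_dist_le' fun x hx y hy => ?_⟩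
  have hMt : |A t| + |B t| + |C t| ≤ M := (le_abs_self _).trans (hM t ht)
  simp only [Real.dist_eq]
  exact abs_cubic_sub_cubic_le (M := M) (by linarith [abs_nonneg (B t), abs_nonneg (C t)])
    (by linarith [abs_nonneg (A t), abs_nonneg (C t)])
    (by linarith [abs_nonneg (A t), abs_nonneg (B t)]) (abs_le.2 hx) (abs_le.2 hy)

namespace IsGeneralAbelSolution

variable {γ γ₁ γ₂ : ℝ → ℝ}

theorem continuousOn (hγ : IsGeneralAbelSolution A B C γ) : ContinuousOn γ (Icc 0 1) :=
  fun t ht => (hγ t ht).continuousWithinAt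

theorem eqOn_Icc_of_eq (hA : ContinuousOn A (Icc 0 1)) (hB : ContinuousOn B (Icc 0 1))
    (hC : ContinuousOn C (Icc 0 1)) (h₁ : IsGeneralAbelSolution A B C γ₁)
    (h₂ : IsGeneralAbelSolution A B C γ₂) {s : ℝ} (hs : s ∈ Icc (0:ℝ) 1)
    (heq : γ₁ s = γ₂ s) : EqOn γ₁ γ₂ (Icc s 1) := by
  obtain ⟨R₁, hR₁⟩ := isCompact_Icc.exists_bound_of_continuousOn h₁.continuousOn
  obtain ⟨R₂, hR₂⟩ := isCompact_Icc.exists_bound_of_continuousOn h₂.continuousOn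
  obtain ⟨K, hK⟩ := exists_lipschitzOnWith_abel hA hB hC (max R₁ R₂)
  have hsub : Icc s 1 ⊆ Icc 0 1 := Icc_subset_Icc_left hs.1
  have hIci {γ : ℝ → ℝ} (hγ : IsGeneralAbelSolution A B C γ) (t : ℝ) (ht : t ∈ Ico s 1) :
      HasDerivWithinAt γ (A t * γ t ^ 3 + B t * γ t ^ 2 + C t * γ t) (Ici t) t :=
    (hγ t (hsub (Ico_subset_Icc_self ht))).mono_of_mem_nhdsWithin
      (Icc_mem_nhdsGE_of_mem ⟨hs.1.trans ht.1, ht.2⟩)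
  have hbound {γ : ℝ → ℝ} {R : ℝ} (hR : ∀ t ∈ Icc (0:ℝ) 1, ‖γ t‖ ≤ R) (hle : R ≤ max R₁ R₂)
      (t : ℝ) (ht : t ∈ Ico s 1) : γ t ∈ Icc (-max R₁ R₂) (max R₁ R₂) :=
    abs_le.1 ((hR t (hsub (Ico_subset_Icc_self ht))).trans hle)
  exact ODE_solution_unique_of_mem_Icc_right (fun t ht => hK t (hsub (Ico_subset_Icc_self ht)))
    (h₁.continuousOn.mono hsub) (hIci h₁) (hbound hR₁ (le_max_left _ _))
    (h₂.continuousOn.mono hsub) (hIci h₂) (hbound hR₂ (le_max_right _ _)) heq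

end IsGeneralAbelSolution

theorem isGeneralPeriodicOrbit_zero (A B C : ℝ → ℝ) : IsGeneralPeriodicOrbit A B C 0 :=
  ⟨fun t _ => (hasDerivWithinAt_const t _ 0).congr_deriv (by simp), rfl⟩

namespace IsGeneralPeriodicOrbit

variable {γ γ₁ γ₂ : ℝ → ℝ}

theorem eq_at_zero_of_eq (hA : ContinuousOn A (Icc 0 1)) (hB : ContinuousOn B (Icc 0 1))
    (hC : ContinuousOn C (Icc 0 1)) (h₁ : IsGeneralPeriodicOrbit A B C γ₁)
    (h₂ : IsGeneralPeriodicOrbit A B C γ₂) {s : ℝ} (hs : s ∈ Icc (0:ℝ) 1)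
    (heq : γ₁ s = γ₂ s) : γ₁ 0 = γ₂ 0 := by
  rw [h₁.2, h₂.2]
  exact h₁.1.eqOn_Icc_of_eq hA hB hC h₂.1 hs heq (right_mem_Icc.2 hs.2)

theorem ne_zero (hA : ContinuousOn A (Icc 0 1)) (hB : ContinuousOn B (Icc 0 1))
    (hC : ContinuousOn C (Icc 0 1)) (hγ : IsGeneralPeriodicOrbit A B C γ) (h0 : γ 0 ≠ 0) :
    ∀ t ∈ Icc (0:ℝ) 1, γ t ≠ 0 :=
  fun _ ht h => h0 (hγ.eq_at_zero_of_eq hA hB hC (isGeneralPeriodicOrbit_zero A B C) ht h)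

theorem lt_of_lt_at_zero (hA : ContinuousOn A (Icc 0 1)) (hB : ContinuousOn B (Icc 0 1))
    (hC : ContinuousOn C (Icc 0 1)) (h₁ : IsGeneralPeriodicOrbit A B C γ₁)
    (h₂ : IsGeneralPeriodicOrbit A B C γ₂) (hlt : γ₁ 0 < γ₂ 0) :
    ∀ t ∈ Icc (0:ℝ) 1, γ₁ t < γ₂ t := by
  have := isPreconnected_Icc.forall_lt_of_forall_ne (c := 0)
    (h₁.1.continuousOn.sub h₂.1.continuousOn)
    (fun t ht h => hlt.ne (h₁.eq_at_zero_of_eq hA hB hC h₂ ht (sub_eq_zero.1 h)))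
    (left_mem_Icc.2 zero_le_one) (sub_neg.2 hlt)
  exact fun t ht => sub_neg.1 (this t ht)

variable {a b c : ℝ}

theorem ne_of_root_ne_zero
    (hR : ∀ t ∈ Icc (0:ℝ) 1, ∀ x : ℝ,
      0 < (a * A t + b * B t) * x ^ 2 + 2 * (b * C t - c * A t) * x - (c * B t + a * C t))
    (hγ : IsGeneralPeriodicOrbit A B C γ) {r : ℝ} (hr0 : r ≠ 0) (hr : b * r ^ 2 - a * r + c = 0) :
    ∀ t ∈ Icc (0:ℝ) 1, γ t ≠ r := by
  have hRr (t : ℝ) : (a * A t + b * B t) * r ^ 2 + 2 * (b * C t - c * A t) * r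
      - (c * B t + a * C t) = (A t * r ^ 2 + B t * r + C t) * (2 * b * r - a) := by
    linear_combination (-(2 * A t * r + B t)) * hr
  have hε : r * (2 * b * r - a) ≠ 0 := by
    refine mul_ne_zero hr0 fun h => ?_
    have := hR 0 (left_mem_Icc.2 zero_le_one) r
    rw [hRr, h, mul_zero] at this
    exact this.false
  -- `φ = ε (γ - r)` with `ε = r V'(r)` crosses `0` only upwards, as `φ' = r² R(t, r)` there
  have hpos (t : ℝ) (ht : t ∈ Icc (0:ℝ) 1) (h : r * (2 * b * r - a) * (γ t - r) = 0) :
      0 < r * (2 * b * r - a) * (A t * γ t ^ 3 + B t * γ t ^ 2 + C t * γ t) := by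
    have hγt : γ t = r := by simpa [sub_eq_zero, hε] using h
    have := hR t ht r
    rw [hRr] at this
    rw [hγt]
    calc (0:ℝ) < r ^ 2 * ((A t * r ^ 2 + B t * r + C t) * (2 * b * r - a)) := by positivity
      _ = _ := by ring
  have hφ := ne_zero_of_deriv_pos_at_zeros zero_lt_one
    (φ := fun t => r * (2 * b * r - a) * (γ t - r))
    (fun t ht => ((hγ.1 t ht).sub_const r).const_mul _) hpos (by simp [hγ.2])
  exact fun t ht h => hφ t ht (by simp [h])

theorem ne_of_root (hA : ContinuousOn A (Icc 0 1)) (hB : ContinuousOn B (Icc 0 1))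
    (hC : ContinuousOn C (Icc 0 1))
    (hR : ∀ t ∈ Icc (0:ℝ) 1, ∀ x : ℝ,
      0 < (a * A t + b * B t) * x ^ 2 + 2 * (b * C t - c * A t) * x - (c * B t + a * C t))
    (hγ : IsGeneralPeriodicOrbit A B C γ) (h0 : γ 0 ≠ 0) {r : ℝ}
    (hr : r * (b * r ^ 2 - a * r + c) = 0) : ∀ t ∈ Icc (0:ℝ) 1, γ t ≠ r := by
  rcases eq_or_ne r 0 with rfl | hr0
  · exact hγ.ne_zero hA hB hC h0
  · exact hγ.ne_of_root_ne_zero hR hr0 ((mul_eq_zero.1 hr).resolve_left hr0)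

theorem exists_root_between (hA : ContinuousOn A (Icc 0 1)) (hB : ContinuousOn B (Icc 0 1))
    (hC : ContinuousOn C (Icc 0 1))
    (hR : ∀ t ∈ Icc (0:ℝ) 1, ∀ x : ℝ,
      0 < (a * A t + b * B t) * x ^ 2 + 2 * (b * C t - c * A t) * x - (c * B t + a * C t))
    (h₁ : IsGeneralPeriodicOrbit A B C γ₁) (h₂ : IsGeneralPeriodicOrbit A B C γ₂)
    (h0₁ : γ₁ 0 ≠ 0) (h0₂ : γ₂ 0 ≠ 0) (hlt : γ₁ 0 < γ₂ 0) :
    ∃ τ ∈ Ioo (γ₁ 0) (γ₂ 0), τ * (b * τ ^ 2 - a * τ + c) = 0 := by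
  by_contra! hsep
  have hord := h₁.lt_of_lt_at_zero hA hB hC h₂ hlt
  obtain ⟨m, M, hmem, hZ⟩ := isCompact_Icc.exists_Icc_forall_notMem
    (Z := {x | x * (b * x ^ 2 - a * x + c) = 0}) isPreconnected_Icc (left_mem_Icc.2 zero_le_one)
    h₁.1.continuousOn h₂.1.continuousOn (fun t ht => (hord t ht).le)
    (fun t ht h => h₁.ne_of_root hA hB hC hR h0₁ h t ht rfl)
    (fun t ht h => h₂.ne_of_root hA hB hC hR h0₂ h t ht rfl) (fun z hz hzI => hsep z hzI hz)
  have hp : ∀ x ∈ Icc m M, x * (b * x ^ 2 - a * x + c) ≠ 0 := fun x hx h => hZ x h hx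
  obtain ⟨H, hH⟩ := ContinuousOn.exists_hasDerivAt_Icc
    (f := fun x => (x * (b * x ^ 2 - a * x + c))⁻¹)
    ((by fun_prop : Continuous _).continuousOn.inv₀ hp)
  -- `H' = 1 / (x V(x))` turns `x' = x W(t, x)` into `(H ∘ γ)' = W(t, γ) / V(γ)`
  have hHγ {γ : ℝ → ℝ} (hγ : IsGeneralAbelSolution A B C γ) (hγm : ∀ t ∈ Icc (0:ℝ) 1, γ t ∈ Icc m M)
      (t : ℝ) (ht : t ∈ Icc (0:ℝ) 1) : HasDerivWithinAt (fun t => H (γ t))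
        ((A t * γ t ^ 2 + B t * γ t + C t) / (b * γ t ^ 2 - a * γ t + c)) (Icc 0 1) t := by
    refine ((hH _ (hγm t ht)).comp_hasDerivWithinAt t (hγ t ht)).congr_deriv ?_
    obtain ⟨hγ0, hV⟩ := mul_ne_zero_iff.1 (hp _ (hγm t ht))
    field_simp
  have hu (t : ℝ) (ht : t ∈ Icc (0:ℝ) 1) := (hHγ h₁.1 (fun t ht => (hmem t ht).1) t ht).sub
    (hHγ h₂.1 (fun t ht => (hmem t ht).2) t ht)
  obtain ⟨τ, hτ, hτ0⟩ := exists_hasDerivAt_eq_zero zero_lt_one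
    (fun t ht => (hu t ht).continuousWithinAt) (by simp [h₁.2, h₂.2])
    fun t ht => (hu t (Ioo_subset_Icc_self ht)).hasDerivAt (Icc_mem_nhds ht.1 ht.2)
  have hτI := Ioo_subset_Icc_self hτ
  exact (sub_pos.2 (strictAntiOn_quadratic_div_quadratic (convex_Icc m M)
    (fun x hx h => hp x hx (by rw [h, mul_zero])) (hR τ hτI) (hmem τ hτI).1 (hmem τ hτI).2
    (hord τ hτI))).ne' hτ0

end IsGeneralPeriodicOrbit

theorem encard_initial_values_periodic_orbits_le_four {a b c : ℝ}
    (hA : ContinuousOn A (Icc 0 1)) (hB : ContinuousOn B (Icc 0 1))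
    (hC : ContinuousOn C (Icc 0 1))
    (hR : ∀ t ∈ Icc (0:ℝ) 1, ∀ x : ℝ,
      0 < (a * A t + b * B t) * x ^ 2 + 2 * (b * C t - c * A t) * x - (c * B t + a * C t)) :
    {ρ : ℝ | ρ ≠ 0 ∧ ∃ γ : ℝ → ℝ, IsGeneralPeriodicOrbit A B C γ ∧ γ 0 = ρ}.encard ≤ 4 := by
  classical
  let P : Cubic ℝ := ⟨b, -a, c, 0⟩
  have hP : P.toPoly ≠ 0 := by
    have : b ≠ 0 ∨ -a ≠ 0 ∨ c ≠ 0 := by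
      by_contra! h
      obtain ⟨hb, ha, hc⟩ := h
      simpa [hb, neg_eq_zero.1 ha, hc] using hR 0 (left_mem_Icc.2 zero_le_one) 0
    rcases this with h | h | h
    exacts [Cubic.ne_zero_of_a_ne_zero h, Cubic.ne_zero_of_b_ne_zero h,
      Cubic.ne_zero_of_c_ne_zero h]
  calc _ ≤ (P.roots.toFinset.card : ℕ∞) + 1 := by
        refine Set.encard_le_card_add_one_of_exists_between _ ?_
        rintro _ ⟨h0₁, γ₁, h₁, rfl⟩ _ ⟨h0₂, γ₂, h₂, rfl⟩ hlt
        obtain ⟨τ, hτ, hroot⟩ := h₁.exists_root_between hA hB hC hR h₂ h0₁ h0₂ hlt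
        refine ⟨τ, Multiset.mem_toFinset.2 ((Cubic.mem_roots_iff hP τ).2 ?_), hτ⟩
        linear_combination hroot
    _ ≤ 3 + 1 := by gcongr; exact_mod_cast P.card_roots_le
    _ = 4 := by norm_num

end

theorem general_abel_at_most_four_periodic_orbits_general
    (A B C : ℝ → ℝ)
    (hA : ContinuousOn A (Set.Icc 0 1)) (hB : ContinuousOn B (Set.Icc 0 1))
    (hC : ContinuousOn C (Set.Icc 0 1))
    (a b c : ℝ)
    (h_sign : (∀ t ∈ Set.Icc (0:ℝ) 1, 0 ≤ a * A t + b * B t) ∨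
              (∀ t ∈ Set.Icc (0:ℝ) 1, a * A t + b * B t ≤ 0))
    (h_neg : ∀ t ∈ Set.Icc (0:ℝ) 1,
      (b * C t - c * A t) ^ 2 + (a * A t + b * B t) * (c * B t + a * C t) < 0) :
    {ρ : ℝ | ρ ≠ 0 ∧ ∃ γ : ℝ → ℝ, IsGeneralPeriodicOrbit A B C γ ∧ γ 0 = ρ}.encard ≤ 4 := by
  rcases h_sign with h | h
  · exact encard_initial_values_periodic_orbits_le_four hA hB hC fun t ht =>
      quadratic_pos_of_sq_add_mul_neg (h t ht) (h_neg t ht)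
  · refine encard_initial_values_periodic_orbits_le_four (a := -a) (b := -b) (c := -c) hA hB hC
      fun t ht x => ?_
    have := quadratic_pos_of_sq_add_mul_neg (β := -(b * C t - c * A t))
      (γ := -(c * B t + a * C t)) (neg_nonneg.2 (h t ht)) (by linear_combination h_neg t ht) x
    linear_combination this

theorem general_abel_at_most_four_periodic_orbits
    (A B C : ℝ → ℝ)
    (hA : ContinuousOn A (Set.Icc 0 1)) (hB : ContinuousOn B (Set.Icc 0 1))
    (hC : ContinuousOn C (Set.Icc 0 1))
    (a b c : ℝ)
    (h_not_ident_zero : ¬ ∀ t ∈ Set.Icc (0:ℝ) 1, a * A t + b * B t = 0)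
    (h_sign : (∀ t ∈ Set.Icc (0:ℝ) 1, 0 ≤ a * A t + b * B t) ∨
              (∀ t ∈ Set.Icc (0:ℝ) 1, a * A t + b * B t ≤ 0))
    (h_neg : ∀ t ∈ Set.Icc (0:ℝ) 1,
      (b * C t - c * A t) ^ 2 + (a * A t + b * B t) * (c * B t + a * C t) < 0) :
    {ρ : ℝ | ρ ≠ 0 ∧ ∃ γ : ℝ → ℝ, IsGeneralPeriodicOrbit A B C γ ∧ γ 0 = ρ}.encard ≤ 4 :=
  general_abel_at_most_four_periodic_orbits_general A B C hA hB hC a b c h_sign h_neg
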